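/- arXiv:1208.5247 — 4 statements merged into one kernel-verified Lean document; each statement's English description precedes it below -/
import Mathlib

section
/- Let (M,d) be a finite metric space, Q ⊆ M a nonempty finite set with |Q| = n, and let a ∈ M minimize median(Q,·) where median(Q,x) := Σ_{q∈Q} d(q,x). Suppose y, ŷ ∈ M and an integer i satisfy median(Q,ŷ) > 3n·2^{i−1} and median(Q,y) ≤ 3n·2^i. If a' ∈ M satisfies d(a',a) ≤ 2^i, then d(a', y) ≤ 7·2^i. -/
open Finset

theorem Finset.card_mul_dist_le_sum_dist {M : Type*} [PseudoMetricSpace M] (Q : Finset M)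
    (a b y : M) :
    #Q * dist b y ≤ #Q * dist b a + ∑ q ∈ Q, dist q a + ∑ q ∈ Q, dist q y := by
  simp only [← nsmul_eq_mul, ← sum_const, ← sum_add_distrib]
  refine sum_le_sum fun q _ => ?_
  rw [dist_comm q a]
  exact dist_triangle4 b a q y

theorem a_is_near_general {M : Type*} [MetricSpace M]
    (Q : Finset M) (hQ : Q.Nonempty) (a : M)
    (hopt : ∀ x : M, ∑ q ∈ Q, dist q a ≤ ∑ q ∈ Q, dist q x)
    (y : M) (i : ℤ)
    (hy : ∑ q ∈ Q, dist q y ≤ 3 * (Q.card : ℝ) * 2 ^ i)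
    (a' : M) (ha' : dist a' a ≤ 2 ^ i) :
    dist a' y ≤ 7 * 2 ^ i := by
  have hn : (0 : ℝ) < #Q := by exact_mod_cast hQ.card_pos
  refine le_of_mul_le_mul_left ?_ hn
  calc (#Q : ℝ) * dist a' y
      ≤ #Q * dist a' a + ∑ q ∈ Q, dist q a + ∑ q ∈ Q, dist q y :=
        Q.card_mul_dist_le_sum_dist a a' y
    _ ≤ #Q * 2 ^ i + ∑ q ∈ Q, dist q y + ∑ q ∈ Q, dist q y := by
        have := hopt y
        gcongr
    _ ≤ #Q * (7 * 2 ^ i) := by linarith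

/-- Lemma "a_is_near" of the simple 1-median algorithm. -/
theorem a_is_near {M : Type*} [MetricSpace M]
    (Q : Finset M) (hQ : Q.Nonempty) (a : M)
    (hopt : ∀ x : M, ∑ q ∈ Q, dist q a ≤ ∑ q ∈ Q, dist q x)
    (y yhat : M) (i : ℤ)
    (hyhat : ∑ q ∈ Q, dist q yhat > 3 * (Q.card : ℝ) * 2 ^ (i - 1))
    (hy : ∑ q ∈ Q, dist q y ≤ 3 * (Q.card : ℝ) * 2 ^ i)
    (a' : M) (ha' : dist a' a ≤ 2 ^ i) :
    dist a' y ≤ 7 * 2 ^ i :=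
  a_is_near_general Q hQ a hopt y i hy a' ha'
end

section
/- Let (M,d) be a finite metric space, Q ⊆ M nonempty finite, a ∈ M an optimal 1-center with value OPT = max_{q∈Q} d(a,q) and 2^i ≤ 4·OPT for an integer i. Let ε' > 0 and let R be a finite set such that every q ∈ Q has a representative r(q) ∈ R with d(q, r(q)) ≤ ε'·2^{i+1}. Suppose x̂ ∈ M and a_{ε'} ∈ M satisfy: max_{r∈R} d(x̂,r) ≤ max_{r∈R} d(a_{ε'},r), d(a, a_{ε'}) ≤ ε'·2^{i+1}, and every r ∈ R equals r(q) for some q ∈ Q. Then max_{q∈Q} d(x̂,q) ≤ OPT + 3·ε'·2^{i+1} ≤ (1 + 24·ε')·OPT. -/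
/-! Every point of `Q` lies within `δ = ε' 2^(i+1)` of `R` and vice versa, so from any centre the
radii of `Q` and of `R` differ by at most `δ`, and moving the centre from `a` to `aε` costs another
`δ`: `rad_Q(x̂) ≤ rad_R(x̂) + δ ≤ rad_R(aε) + δ ≤ rad_Q(aε) + 2δ ≤ OPT + 3δ`. Finally
`2^i ≤ 4 OPT` turns `3δ = 6 ε' 2^i` into at most `24 ε' OPT`. -/

namespace Finset

variable {M : Type*} [PseudoMetricSpace M]

theorem sup'_dist_le_sup'_add_of_forall_exists_dist_le {s t : Finset M} (hs : s.Nonempty)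
    (ht : t.Nonempty) (x : M) {δ : ℝ} (h : ∀ p ∈ s, ∃ q ∈ t, dist p q ≤ δ) :
    s.sup' hs (dist x ·) ≤ t.sup' ht (dist x ·) + δ :=
  sup'_le hs _ fun p hp ↦ by
    obtain ⟨q, hq, hpq⟩ := h p hp
    calc dist x p ≤ dist x q + dist q p := dist_triangle x q p
      _ ≤ t.sup' ht (dist x ·) + δ := by
        gcongr
        · exact le_sup' (dist x ·) hq
        · rwa [dist_comm]

theorem sup'_dist_le_sup'_dist_add (s : Finset M) (hs : s.Nonempty) (x y : M) :
    s.sup' hs (dist x ·) ≤ s.sup' hs (dist y ·) + dist x y :=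
  sup'_le hs _ fun p hp ↦
    calc dist x p ≤ dist x y + dist y p := dist_triangle x y p
      _ ≤ s.sup' hs (dist y ·) + dist x y := by
        rw [add_comm]
        gcongr
        exact le_sup' (dist y ·) hp

end Finset

theorem one_center_refinement_general {M : Type*} [MetricSpace M]
    (Q : Finset M) (hQ : Q.Nonempty) (a : M)
    (i : ℤ) (hi : (2 : ℝ) ^ i ≤ 4 * Q.sup' hQ (fun q => dist a q))
    (ε' : ℝ) (hε' : 0 < ε')
    (R : Finset M) (hR : R.Nonempty) (r : M → M)
    (hrep : ∀ q ∈ Q, r q ∈ R ∧ dist q (r q) ≤ ε' * 2 ^ (i + 1))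
    (hsurj : ∀ s ∈ R, ∃ q ∈ Q, r q = s)
    (xhat aε : M)
    (hmin : R.sup' hR (fun s => dist xhat s) ≤ R.sup' hR (fun s => dist aε s))
    (haε : dist a aε ≤ ε' * 2 ^ (i + 1)) :
    Q.sup' hQ (fun q => dist xhat q)
        ≤ Q.sup' hQ (fun q => dist a q) + 3 * ε' * 2 ^ (i + 1) ∧
      Q.sup' hQ (fun q => dist a q) + 3 * ε' * 2 ^ (i + 1)
        ≤ (1 + 24 * ε') * Q.sup' hQ (fun q => dist a q) := by
  have hxhat := Finset.sup'_dist_le_sup'_add_of_forall_exists_dist_le hQ hR xhat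
    fun q hq ↦ ⟨r q, hrep q hq⟩
  have haεR := Finset.sup'_dist_le_sup'_add_of_forall_exists_dist_le hR hQ aε fun s hs ↦ by
    obtain ⟨q, hq, rfl⟩ := hsurj s hs
    exact ⟨q, hq, by rw [dist_comm]; exact (hrep q hq).2⟩
  have haεQ := Finset.sup'_dist_le_sup'_dist_add Q hQ aε a
  rw [dist_comm] at haεQ
  have hpow : (2 : ℝ) ^ (i + 1) = 2 * 2 ^ i := by
    rw [zpow_add_one₀ two_ne_zero, mul_comm]
  refine ⟨by linarith, ?_⟩
  rw [hpow]
  linarith [mul_le_mul_of_nonneg_left hi hε'.le]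

/-- Approximation guarantee of the accelerated 1-center refinement. -/
theorem one_center_refinement {M : Type*} [MetricSpace M]
    (Q : Finset M) (hQ : Q.Nonempty) (a : M)
    (hopt : ∀ x : M,
      Q.sup' hQ (fun q => dist a q) ≤ Q.sup' hQ (fun q => dist x q))
    (i : ℤ) (hi : (2 : ℝ) ^ i ≤ 4 * Q.sup' hQ (fun q => dist a q))
    (ε' : ℝ) (hε' : 0 < ε')
    (R : Finset M) (hR : R.Nonempty) (r : M → M)
    (hrep : ∀ q ∈ Q, r q ∈ R ∧ dist q (r q) ≤ ε' * 2 ^ (i + 1))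
    (hsurj : ∀ s ∈ R, ∃ q ∈ Q, r q = s)
    (xhat aε : M)
    (hmin : R.sup' hR (fun s => dist xhat s) ≤ R.sup' hR (fun s => dist aε s))
    (haε : dist a aε ≤ ε' * 2 ^ (i + 1)) :
    Q.sup' hQ (fun q => dist xhat q)
        ≤ Q.sup' hQ (fun q => dist a q) + 3 * ε' * 2 ^ (i + 1) ∧
      Q.sup' hQ (fun q => dist a q) + 3 * ε' * 2 ^ (i + 1)
        ≤ (1 + 24 * ε') * Q.sup' hQ (fun q => dist a q) :=
  one_center_refinement_general Q hQ a i hi ε' hε' R hR r hrep hsurj xhat aε hmin haε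
end

section
/- Let (M,d) be a finite metric space, Q ⊆ M nonempty finite, and A ⊆ M with |A| = p an optimal p-center set with value OPT = max_{q∈Q} d(q,A), where 2^i ≤ 4·OPT for an integer i. Let ε' > 0 and R a finite set such that each q ∈ Q has r(q) ∈ R with d(q,r(q)) ≤ ε'·2^{i+1}, and each r ∈ R equals r(q) for some q ∈ Q. Let A_{ε'} be a set containing for each a ∈ A a point a_{ε'} with d(a, a_{ε'}) ≤ ε'·2^{i+1}. If X̂ ⊆ M satisfies max_{r∈R} d(r, X̂) ≤ max_{r∈R} d(r, A_{ε'}), then max_{q∈Q} d(q, X̂) ≤ OPT + 3·ε'·2^{i+1} ≤ (1 + 24·ε')·OPT. -/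
/-!
Every query point `q` is within `ε'·2^{i+1}` of its representative `r(q)`, and every
representative is within that distance of some query point. Hence passing between `Q` and `R`
changes the covering radius of any centre set by at most `ε'·2^{i+1}`, and so does replacing
`A` by `A_{ε'}`. Going from `Q` to `R`, swapping `X̂` for `A_{ε'}` by hypothesis, returning to `Q`
and replacing `A_{ε'}` by `A` costs three such steps.
-/

namespace Finset

variable {M : Type*} [PseudoMetricSpace M]

theorem inf'_dist_le_dist_add_inf' (S : Finset M) (hS : S.Nonempty) (x y : M) :
    S.inf' hS (fun s => dist y s) ≤ dist y x + S.inf' hS (fun s => dist x s) := by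
  obtain ⟨s, hs, hxs⟩ := S.exists_mem_eq_inf' hS (fun s => dist x s)
  calc S.inf' hS (fun s => dist y s) ≤ dist y s := S.inf'_le _ hs
    _ ≤ dist y x + dist x s := dist_triangle y x s
    _ = dist y x + S.inf' hS (fun s => dist x s) := by rw [hxs]

theorem inf'_dist_le_inf'_add_of_forall_exists_dist_le {A B : Finset M} (hA : A.Nonempty)
    (hB : B.Nonempty) {δ : ℝ} (h : ∀ a ∈ A, ∃ b ∈ B, dist a b ≤ δ) (x : M) :
    B.inf' hB (fun b => dist x b) ≤ A.inf' hA (fun a => dist x a) + δ := by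
  obtain ⟨a, ha, hxa⟩ := A.exists_mem_eq_inf' hA (fun a => dist x a)
  obtain ⟨b, hb, hab⟩ := h a ha
  calc B.inf' hB (fun b => dist x b) ≤ dist x b := B.inf'_le _ hb
    _ ≤ dist x a + dist a b := dist_triangle x a b
    _ ≤ A.inf' hA (fun a => dist x a) + δ := by rw [hxa]; gcongr

theorem sup'_inf'_dist_le_sup'_inf'_add_of_forall_exists_dist_le (Q : Finset M)
    (hQ : Q.Nonempty) {A B : Finset M} (hA : A.Nonempty) (hB : B.Nonempty) {δ : ℝ}
    (h : ∀ a ∈ A, ∃ b ∈ B, dist a b ≤ δ) :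
    Q.sup' hQ (fun q => B.inf' hB (fun b => dist q b))
      ≤ Q.sup' hQ (fun q => A.inf' hA (fun a => dist q a)) + δ :=
  Q.sup'_le _ _ fun q hq =>
    (inf'_dist_le_inf'_add_of_forall_exists_dist_le hA hB h q).trans <|
      add_le_add_left (Q.le_sup' (fun q => A.inf' hA (fun a => dist q a)) hq) δ

theorem sup'_inf'_dist_le_sup'_add_of_forall_exists_dist_le {Q R : Finset M}
    (hQ : Q.Nonempty) (hR : R.Nonempty) (S : Finset M) (hS : S.Nonempty) {δ : ℝ}
    (h : ∀ q ∈ Q, ∃ r ∈ R, dist q r ≤ δ) :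
    Q.sup' hQ (fun q => S.inf' hS (fun s => dist q s))
      ≤ R.sup' hR (fun r => S.inf' hS (fun s => dist r s)) + δ := by
  refine Q.sup'_le _ _ fun q hq => ?_
  obtain ⟨r, hr, hqr⟩ := h q hq
  calc S.inf' hS (fun s => dist q s) ≤ dist q r + S.inf' hS (fun s => dist r s) :=
        inf'_dist_le_dist_add_inf' S hS r q
    _ ≤ δ + R.sup' hR (fun r => S.inf' hS (fun s => dist r s)) :=
        add_le_add hqr (R.le_sup' (fun r => S.inf' hS (fun s => dist r s)) hr)
    _ = _ := add_comm _ _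

end Finset

theorem add_three_mul_zpow_succ_le {T ε : ℝ} (hε : 0 ≤ ε) {i : ℤ} (hi : (2 : ℝ) ^ i ≤ 4 * T) :
    T + 3 * ε * 2 ^ (i + 1) ≤ (1 + 24 * ε) * T := by
  rw [zpow_add_one₀ two_ne_zero]
  nlinarith

theorem p_center_refinement_general {M : Type*} [MetricSpace M]
    (Q : Finset M) (hQ : Q.Nonempty)
    (A : Finset M) (hA : A.Nonempty)
    (i : ℤ)
    (hi : (2 : ℝ) ^ i
      ≤ 4 * Q.sup' hQ (fun q => A.inf' hA (fun s => dist q s)))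
    (ε' : ℝ) (hε' : 0 < ε')
    (R : Finset M) (hR : R.Nonempty) (r : M → M)
    (hrep : ∀ q ∈ Q, r q ∈ R ∧ dist q (r q) ≤ ε' * 2 ^ (i + 1))
    (hsurj : ∀ s ∈ R, ∃ q ∈ Q, r q = s)
    (Aε : Finset M) (hAε : Aε.Nonempty)
    (hAεnear : ∀ a ∈ A, ∃ aε ∈ Aε, dist a aε ≤ ε' * 2 ^ (i + 1))
    (X : Finset M) (hX : X.Nonempty)
    (hmin : R.sup' hR (fun s => X.inf' hX (fun x => dist s x))
      ≤ R.sup' hR (fun s => Aε.inf' hAε (fun x => dist s x))) :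
    Q.sup' hQ (fun q => X.inf' hX (fun x => dist q x))
        ≤ Q.sup' hQ (fun q => A.inf' hA (fun s => dist q s))
            + 3 * ε' * 2 ^ (i + 1) ∧
      Q.sup' hQ (fun q => A.inf' hA (fun s => dist q s)) + 3 * ε' * 2 ^ (i + 1)
        ≤ (1 + 24 * ε')
            * Q.sup' hQ (fun q => A.inf' hA (fun s => dist q s)) := by
  have hQR : ∀ q ∈ Q, ∃ s ∈ R, dist q s ≤ ε' * 2 ^ (i + 1) :=
    fun q hq => ⟨r q, hrep q hq⟩
  have hRQ : ∀ s ∈ R, ∃ q ∈ Q, dist s q ≤ ε' * 2 ^ (i + 1) := by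
    intro s hs
    obtain ⟨q, hq, rfl⟩ := hsurj s hs
    exact ⟨q, hq, dist_comm q (r q) ▸ (hrep q hq).2⟩
  have hXQ := Finset.sup'_inf'_dist_le_sup'_add_of_forall_exists_dist_le hQ hR X hX hQR
  have hAεR := Finset.sup'_inf'_dist_le_sup'_add_of_forall_exists_dist_le hR hQ Aε hAε hRQ
  have hAεA :=
    Finset.sup'_inf'_dist_le_sup'_inf'_add_of_forall_exists_dist_le Q hQ hA hAε hAεnear
  exact ⟨by linarith, add_three_mul_zpow_succ_le hε'.le hi⟩

/-- (1+ε)-approximation guarantee for the accelerated p-center refinement. -/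
theorem p_center_refinement {M : Type*} [MetricSpace M]
    (Q : Finset M) (hQ : Q.Nonempty) (p : ℕ)
    (A : Finset M) (hA : A.Nonempty) (hAcard : A.card = p)
    (hopt : ∀ A' : Finset M, A'.card = p → (hA' : A'.Nonempty) →
      Q.sup' hQ (fun q => A.inf' hA (fun s => dist q s))
        ≤ Q.sup' hQ (fun q => A'.inf' hA' (fun s => dist q s)))
    (i : ℤ)
    (hi : (2 : ℝ) ^ i
      ≤ 4 * Q.sup' hQ (fun q => A.inf' hA (fun s => dist q s)))
    (ε' : ℝ) (hε' : 0 < ε')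
    (R : Finset M) (hR : R.Nonempty) (r : M → M)
    (hrep : ∀ q ∈ Q, r q ∈ R ∧ dist q (r q) ≤ ε' * 2 ^ (i + 1))
    (hsurj : ∀ s ∈ R, ∃ q ∈ Q, r q = s)
    (Aε : Finset M) (hAε : Aε.Nonempty)
    (hAεnear : ∀ a ∈ A, ∃ aε ∈ Aε, dist a aε ≤ ε' * 2 ^ (i + 1))
    (X : Finset M) (hX : X.Nonempty)
    (hmin : R.sup' hR (fun s => X.inf' hX (fun x => dist s x))
      ≤ R.sup' hR (fun s => Aε.inf' hAε (fun x => dist s x))) :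
    Q.sup' hQ (fun q => X.inf' hX (fun x => dist q x))
        ≤ Q.sup' hQ (fun q => A.inf' hA (fun s => dist q s))
            + 3 * ε' * 2 ^ (i + 1) ∧
      Q.sup' hQ (fun q => A.inf' hA (fun s => dist q s)) + 3 * ε' * 2 ^ (i + 1)
        ≤ (1 + 24 * ε')
            * Q.sup' hQ (fun q => A.inf' hA (fun s => dist q s)) :=
  p_center_refinement_general Q hQ A hA i hi ε' hε' R hR r hrep hsurj Aε hAε hAεnear X hX hmin
end

section
/- Let Q be a finite set in a metric space (M,d), p ≥ 1, and let B ⊆ Q be produced by Gonzalez's greedy farthest-point algorithm: B = {b₁,...,b_p} where b₁ ∈ Q is arbitrary and b_{j+1} is a point of Q maximizing d(q, {b₁,...,b_j}). Then max_{q∈Q} d(q, B) ≤ 2·min_{A⊆M, |A|=p} max_{q∈Q} d(q, A). -/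
/-!
Let `r` be the covering radius of an optimal set `A` of `p` centers. For `q ∈ Q`, the `p + 1`
points `b 0, …, b (p - 1), q` each lie within `r` of `A`, so two of them share a nearest center
and are at distance at most `2 r`. If these are `b k` and `q`, then `q` is within `2 r` of the
greedy centers directly. If they are `b k` and `b l` with `k < l`, then by the greedy choice of
`b l` no point of `Q` is farther from `b 0, …, b (l - 1)` than `b l`, which is within `2 r` of
`b k`.
-/

open Metric

theorem Finset.exists_mem_dist_le_of_infDist_le {M : Type*} [PseudoMetricSpace M]
    {A : Finset M} (hA : A.Nonempty) {x : M} {r : ℝ} (h : infDist x (A : Set M) ≤ r) :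
    ∃ a ∈ A, dist x a ≤ r := by
  obtain ⟨a, ha, hxa⟩ := A.finite_toSet.isCompact.exists_infDist_eq_dist (coe_nonempty.2 hA) x
  exact ⟨a, ha, hxa ▸ h⟩

theorem exists_ne_dist_le_two_mul_of_card_lt {M ι : Type*} [PseudoMetricSpace M] [Fintype ι]
    {A : Finset M} {f : ι → M} {r : ℝ} (hcard : A.card < Fintype.card ι)
    (hcover : ∀ i, ∃ a ∈ A, dist (f i) a ≤ r) :
    ∃ i j, i ≠ j ∧ dist (f i) (f j) ≤ 2 * r := by
  choose c hcA hc using hcover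
  obtain ⟨i, -, j, -, hij, hcij⟩ :=
    Finset.exists_ne_map_eq_of_card_lt_of_maps_to (s := Finset.univ) hcard
      fun i _ => Finset.mem_coe.2 (hcA i)
  refine ⟨i, j, hij, ?_⟩
  calc dist (f i) (f j) ≤ dist (f i) (c i) + dist (c j) (f j) :=
        hcij ▸ dist_triangle _ _ _
    _ ≤ r + r := add_le_add (hc i) (dist_comm (f j) (c j) ▸ hc j)
    _ = 2 * r := by ring

theorem infDist_image_range_le_dist_of_lt {M : Type*} [PseudoMetricSpace M] [DecidableEq M]
    {Q : Finset M} {p : ℕ} {b : ℕ → M}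
    (hgreedy : ∀ j, 1 ≤ j → j < p → ∀ q ∈ Q,
      infDist q (((Finset.range j).image b : Finset M) : Set M)
        ≤ infDist (b j) (((Finset.range j).image b : Finset M) : Set M))
    {q : M} (hq : q ∈ Q) {k l : ℕ} (hkl : k < l) (hl : l < p) :
    infDist q (((Finset.range p).image b : Finset M) : Set M) ≤ dist (b k) (b l) := by
  have hk : b k ∈ (((Finset.range l).image b : Finset M) : Set M) :=
    Finset.mem_coe.2 (Finset.mem_image_of_mem b (Finset.mem_range.2 hkl))
  have hsub : (((Finset.range l).image b : Finset M) : Set M)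
      ⊆ (((Finset.range p).image b : Finset M) : Set M) := by gcongr
  calc infDist q (((Finset.range p).image b : Finset M) : Set M)
      ≤ infDist q (((Finset.range l).image b : Finset M) : Set M) :=
        infDist_le_infDist_of_subset hsub ⟨_, hk⟩
    _ ≤ infDist (b l) (((Finset.range l).image b : Finset M) : Set M) :=
        hgreedy l (by omega) hl q hq
    _ ≤ dist (b k) (b l) := dist_comm (b k) (b l) ▸ infDist_le_dist_of_mem hk

/-- Gonzalez's greedy farthest-point algorithm gives a 2-approximation for
p-center with centers allowed from the ambient metric space. -/
theorem gonzalez_two_approx {M : Type*} [MetricSpace M] [DecidableEq M]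
    (Q : Finset M) (hQ : Q.Nonempty) (p : ℕ) (hp : 1 ≤ p)
    (b : ℕ → M) (hb : ∀ j < p, b j ∈ Q)
    (hgreedy : ∀ j, 1 ≤ j → j < p → ∀ q ∈ Q,
      Metric.infDist q (((Finset.range j).image b : Finset M) : Set M)
        ≤ Metric.infDist (b j) (((Finset.range j).image b : Finset M) : Set M)) :
    ∀ A : Finset M, A.card = p →
      Q.sup' hQ (fun q =>
          Metric.infDist q (((Finset.range p).image b : Finset M) : Set M))
        ≤ 2 * Q.sup' hQ (fun q => Metric.infDist q (A : Set M)) := by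
  intro A hA
  have hAne : A.Nonempty := Finset.card_pos.1 (by omega)
  have hcover : ∀ q ∈ Q, ∃ a ∈ A, dist q a ≤ Q.sup' hQ (fun q => infDist q (A : Set M)) :=
    fun q hq => Finset.exists_mem_dist_le_of_infDist_le hAne
      (Q.le_sup' (fun q => infDist q (A : Set M)) hq)
  refine Finset.sup'_le _ _ fun q hq => ?_
  have hmem {k : ℕ} (hk : k < p) : b k ∈ (((Finset.range p).image b : Finset M) : Set M) :=
    Finset.mem_coe.2 (Finset.mem_image_of_mem b (Finset.mem_range.2 hk))
  obtain ⟨i, j, hij, hdist⟩ := exists_ne_dist_le_two_mul_of_card_lt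
    (f := fun i : Option (Fin p) => i.elim q (b ·)) (by simp [hA])
    fun i => hcover _ (by cases i <;> simp [hq, hb])
  refine le_trans ?_ hdist
  rcases i with _ | k <;> rcases j with _ | l
  · exact absurd rfl hij
  · exact infDist_le_dist_of_mem (hmem l.2)
  · exact dist_comm q (b k) ▸ infDist_le_dist_of_mem (hmem k.2)
  · have hkl : (k : ℕ) ≠ l := fun h => hij (congrArg some (Fin.ext h))
    rcases hkl.lt_or_gt with hkl | hlk
    · exact infDist_image_range_le_dist_of_lt hgreedy hq hkl l.2
    · exact dist_comm (b l) (b k) ▸ infDist_image_range_le_dist_of_lt hgreedy hq hlk k.2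
end
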